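/- Proper time of a deterministic system is running time: Let ν be a stochastic dynamical system on a countable type S that is deterministic, i.e., there is a function f : S → S with ν(s, f s) = 1 for every s ∈ S. Then for all states u, v ∈ S, the proper time satisfies τ_ν(u→v) = sInf { (n + 1 : ℝ) : n ∈ ℕ, f^[n] u = v } (taken in [0,∞], equal to ∞ if v is not in the forward orbit of u); that is, τ_ν(u→v) equals the length of the shortest deterministic run from u to v, counted in states. -/

import Mathlib

/-! A deterministic kernel puts all the mass of row `s` on `f s`, so a trajectory of positive
probability can only ever step from `s` to `f s`: it is the run `u, f u, …, f^[n] u`, its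
probability is `1`, and its ratio `T(h) / ν(h)` is its length `n + 1`. -/

open scoped ENNReal NNReal
/-- The probability of a trajectory `h = (s₁, …, sₙ)` under the transition kernel `ν`:
the product of the transition probabilities along adjacent pairs
(so a length-1 trajectory has probability 1). -/
def trajProb {S : Type*} (ν : S → S → NNReal) (h : List S) : NNReal :=
  ((h.zip h.tail).map fun p => ν p.1 p.2).prod

/-- The proper time `τ_ν(u → v)`: the infimum, over all trajectories `h` from `u` to `v`
with positive probability, of `T(h) / ν(h)`, taken in `[0, ∞]`
(so it is `∞` if no such trajectory exists). -/
noncomputable def properTime {S : Type*} (ν : S → S → NNReal) (u v : S) : ℝ≥0∞ :=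
  ⨅ h ∈ {h : List S | h.head? = some u ∧ h.getLast? = some v ∧ 0 < trajProb ν h},
    (h.length : ℝ≥0∞) / (trajProb ν h : ℝ≥0∞)

theorem NNReal.eq_of_tsum_eq_one_of_apply_eq_one {S : Type*} {g : S → ℝ≥0}
    (hg : ∑' t, g t = 1) {a t : S} (ha : g a = 1) (ht : 0 < g t) : t = a := by
  classical
  by_contra hne
  have hsum : Summable g := by
    by_contra h
    rw [tsum_eq_zero_of_not_summable h] at hg
    exact zero_ne_one hg
  have hpair := hsum.sum_le_tsum {a, t} (fun _ _ => zero_le)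
  rw [Finset.sum_pair (Ne.symm hne), hg, ha] at hpair
  exact ht.ne' (le_antisymm (by simpa using hpair) zero_le)

@[simp]
theorem trajProb_cons_cons {S : Type*} (ν : S → S → ℝ≥0) (a b : S) (t : List S) :
    trajProb ν (a :: b :: t) = ν a b * trajProb ν (b :: t) := by
  simp [trajProb]

theorem List.getLast?_iterate_succ {α : Type*} (f : α → α) (a : α) (n : ℕ) :
    (List.iterate f a (n + 1)).getLast? = some (f^[n] a) := by
  rw [List.getLast?_eq_getElem?, List.length_iterate, List.getElem?_iterate _ _ _ _ (by omega)]
  rfl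

section Deterministic

variable {S : Type*} {ν : S → S → ℝ≥0} {f : S → S}

theorem trajProb_iterate (hf : ∀ s, ν s (f s) = 1) (a : S) (n : ℕ) :
    trajProb ν (List.iterate f a n) = 1 := by
  induction n generalizing a with
  | zero => rfl
  | succ n ih =>
    cases n with
    | zero => rfl
    | succ n => simp only [List.iterate, trajProb_cons_cons, hf, one_mul] at ih ⊢; exact ih (f a)

theorem eq_iterate_of_trajProb_pos (hν : ∀ s, ∑' t, ν s t = 1) (hf : ∀ s, ν s (f s) = 1)
    {a : S} {t : List S} (hpos : 0 < trajProb ν (a :: t)) :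
    a :: t = List.iterate f a (t.length + 1) := by
  induction t generalizing a with
  | nil => rfl
  | cons b t ih =>
    rw [trajProb_cons_cons, CanonicallyOrderedAdd.mul_pos] at hpos
    obtain rfl : b = f a := NNReal.eq_of_tsum_eq_one_of_apply_eq_one (hν a) (hf a) hpos.1
    exact congrArg (a :: ·) (ih hpos.2)

theorem trajectory_iff_eq_iterate (hν : ∀ s, ∑' t, ν s t = 1) (hf : ∀ s, ν s (f s) = 1)
    {u v : S} {h : List S} :
    (h.head? = some u ∧ h.getLast? = some v ∧ 0 < trajProb ν h) ↔
      ∃ n, f^[n] u = v ∧ List.iterate f u (n + 1) = h := by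
  constructor
  · rintro ⟨hu, hv, hpos⟩
    rcases h with _ | ⟨a, t⟩
    · simp at hu
    obtain rfl : a = u := by simpa using hu
    rw [eq_iterate_of_trajProb_pos hν hf hpos, List.getLast?_iterate_succ, Option.some_inj] at hv
    exact ⟨t.length, hv, (eq_iterate_of_trajProb_pos hν hf hpos).symm⟩
  · rintro ⟨n, rfl, rfl⟩
    exact ⟨rfl, List.getLast?_iterate_succ f u n, by rw [trajProb_iterate hf]; exact one_pos⟩

end Deterministic

theorem properTime_deterministic_general {S : Type*}
    (ν : S → S → NNReal) (hν : ∀ s : S, ∑' t : S, ν s t = 1)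
    (f : S → S) (hf : ∀ s : S, ν s (f s) = 1) (u v : S) :
    properTime ν u v = sInf {r : ℝ≥0∞ | ∃ n : ℕ, f^[n] u = v ∧ r = ((n : ℝ≥0∞) + 1)} := by
  have htraj : {h : List S | h.head? = some u ∧ h.getLast? = some v ∧ 0 < trajProb ν h} =
      (fun n => List.iterate f u (n + 1)) '' {n | f^[n] u = v} := by
    ext h
    exact trajectory_iff_eq_iterate hν hf
  have htimes : {r : ℝ≥0∞ | ∃ n : ℕ, f^[n] u = v ∧ r = ((n : ℝ≥0∞) + 1)} =
      (fun n : ℕ => (n : ℝ≥0∞) + 1) '' {n | f^[n] u = v} := by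
    ext r
    simp only [Set.mem_ofPred_eq, Set.mem_image, eq_comm]
  rw [properTime, htraj, iInf_image, htimes, sInf_image]
  simp only [List.length_iterate, trajProb_iterate hf, ENNReal.coe_one, div_one, Nat.cast_add,
    Nat.cast_one]

/-- **Proper time of a deterministic system is its running time.** If `ν` is deterministic,
i.e. there is `f : S → S` with `ν s (f s) = 1` for every `s`, then `τ_ν(u→v)` equals the
length (in states) of the shortest deterministic run from `u` to `v`:
`τ_ν(u→v) = sInf { n + 1 : n ∈ ℕ, f^[n] u = v }`, taken in `[0,∞]`
(equal to `∞` if `v` is not in the forward orbit of `u`). -/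
theorem properTime_deterministic {S : Type*} [Countable S]
    (ν : S → S → NNReal) (hν : ∀ s : S, ∑' t : S, ν s t = 1)
    (f : S → S) (hf : ∀ s : S, ν s (f s) = 1) (u v : S) :
    properTime ν u v = sInf {r : ℝ≥0∞ | ∃ n : ℕ, f^[n] u = v ∧ r = ((n : ℝ≥0∞) + 1)} :=
  properTime_deterministic_general ν hν f hf u v
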